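/- arXiv:2408.10087 — 2 statements merged into one kernel-verified Lean document; each statement's English description precedes it below -/
import Mathlib

section
/- Let X be a digital image and i ∈ {1,2}. Then X is NP_i-irreducible if and only if no automorphism of X is NP_i-homotopic to a non-surjective continuous map. -/
/-!
An `NP_i`-homotopy is the same thing as a finite chain of continuous maps in which consecutive
maps are one step apart, so homotopy is an equivalence relation compatible with composition.

If `X` is homotopy equivalent to a smaller `Y` via `f` and `g`, then the identity is homotopic to
`g ∘ f`, which factors through `Y` and so is not surjective. Conversely, if an automorphism `f` is
homotopic to a non-surjective `g`, then `h = f⁻¹ ∘ g` is a non-surjective map homotopic to the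
identity, and so are all its iterates. As `X` is finite, some iterate `e = hⁿ` with `n ≥ 1` is
idempotent, and `X` deformation retracts onto the proper subset `e(X)`.
-/

/-- A digital image: a finite set with a reflexive, symmetric adjacency relation
(a finite reflexive graph). -/
structure DigImage where
  carrier : Type
  [fintype : Fintype carrier]
  adj : carrier → carrier → Prop
  adj_refl : ∀ x, adj x x
  adj_symm : ∀ {x y}, adj x y → adj y x

attribute [instance] DigImage.fintype

/-- `f : (X,κ) → (Y,λ)` is digitally continuous if it preserves adjacency. -/
def DigContinuous (X Y : DigImage) (f : X.carrier → Y.carrier) : Prop :=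
  ∀ ⦃a b : X.carrier⦄, X.adj a b → Y.adj (f a) (f b)

/-- The product of two digital images with the normal product adjacency `NP_i`
(for `i ≤ 1` this is `NP_1`; otherwise `NP_2`): two pairs are adjacent iff
their coordinates are adjacent in at most `i` positions and equal elsewhere. -/
def DigImage.prod (i : ℕ) (X Y : DigImage) : DigImage where
  carrier := X.carrier × Y.carrier
  adj p q :=
    if i ≤ 1 then (p.1 = q.1 ∧ Y.adj p.2 q.2) ∨ (p.2 = q.2 ∧ X.adj p.1 q.1)
    else X.adj p.1 q.1 ∧ Y.adj p.2 q.2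
  adj_refl p := by
    split_ifs
    · exact Or.inl ⟨rfl, Y.adj_refl p.2⟩
    · exact ⟨X.adj_refl p.1, Y.adj_refl p.2⟩
  adj_symm {p q} h := by
    split_ifs at h ⊢ with hi
    · rcases h with ⟨h1, h2⟩ | ⟨h1, h2⟩
      · exact Or.inl ⟨h1.symm, Y.adj_symm h2⟩
      · exact Or.inr ⟨h1.symm, X.adj_symm h2⟩
    · exact ⟨X.adj_symm h.1, Y.adj_symm h.2⟩

/-- The triple product of digital images with the normal product adjacency `NP_i`:
coordinates adjacent in at most `i` positions and equal in all other positions. -/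
def DigImage.prod3 (i : ℕ) (X Y Z : DigImage) : DigImage where
  carrier := X.carrier × Y.carrier × Z.carrier
  adj p q :=
    if i ≤ 1 then
      (p.1 = q.1 ∧ p.2.1 = q.2.1 ∧ Z.adj p.2.2 q.2.2) ∨
      (p.1 = q.1 ∧ p.2.2 = q.2.2 ∧ Y.adj p.2.1 q.2.1) ∨
      (p.2.1 = q.2.1 ∧ p.2.2 = q.2.2 ∧ X.adj p.1 q.1)
    else
      (p.1 = q.1 ∧ Y.adj p.2.1 q.2.1 ∧ Z.adj p.2.2 q.2.2) ∨
      (p.2.1 = q.2.1 ∧ X.adj p.1 q.1 ∧ Z.adj p.2.2 q.2.2) ∨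
      (p.2.2 = q.2.2 ∧ X.adj p.1 q.1 ∧ Y.adj p.2.1 q.2.1)
  adj_refl p := by
    split_ifs
    · exact Or.inl ⟨rfl, rfl, Z.adj_refl p.2.2⟩
    · exact Or.inl ⟨rfl, Y.adj_refl p.2.1, Z.adj_refl p.2.2⟩
  adj_symm {p q} h := by
    split_ifs at h ⊢ with hi
    · rcases h with ⟨h1, h2, h3⟩ | ⟨h1, h2, h3⟩ | ⟨h1, h2, h3⟩
      · exact Or.inl ⟨h1.symm, h2.symm, Z.adj_symm h3⟩
      · exact Or.inr (Or.inl ⟨h1.symm, h2.symm, Y.adj_symm h3⟩)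
      · exact Or.inr (Or.inr ⟨h1.symm, h2.symm, X.adj_symm h3⟩)
    · rcases h with ⟨h1, h2, h3⟩ | ⟨h1, h2, h3⟩ | ⟨h1, h2, h3⟩
      · exact Or.inl ⟨h1.symm, Y.adj_symm h2, Z.adj_symm h3⟩
      · exact Or.inr (Or.inl ⟨h1.symm, X.adj_symm h2, Z.adj_symm h3⟩)
      · exact Or.inr (Or.inr ⟨h1.symm, X.adj_symm h2, Y.adj_symm h3⟩)

/-- The digital interval `[0,m]_ℤ` with the standard adjacency `|a−b| ≤ 1`. -/
def digInterval (m : ℕ) : DigImage where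
  carrier := Fin (m + 1)
  adj a b := |(a : ℤ) - (b : ℤ)| ≤ 1
  adj_refl a := by simp
  adj_symm {a b} h := by
    have h' : |(a : ℤ) - (b : ℤ)| ≤ 1 := h
    rw [abs_sub_comm] at h'
    exact h'

/-- `f` and `g` are `NP_i`-digitally homotopic: there is an
`NP_i`-continuous `H : X × [0,m]_ℤ → Y` with `H(·,0) = f` and `H(·,m) = g`. -/
def DigHomotopic (i : ℕ) (X Y : DigImage) (f g : X.carrier → Y.carrier) : Prop :=
  ∃ (m : ℕ) (H : X.carrier × Fin (m + 1) → Y.carrier),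
    DigContinuous (DigImage.prod i X (digInterval m)) Y H ∧
    (∀ x, H (x, 0) = f x) ∧ (∀ x, H (x, Fin.last m) = g x)

/-- An `NP_i`-digital H-space `(X,e,μ)`. -/
structure IsHSpace (i : ℕ) (X : DigImage) (e : X.carrier)
    (μ : X.carrier × X.carrier → X.carrier) : Prop where
  continuous : DigContinuous (DigImage.prod i X X) X μ
  right_unit : DigHomotopic i X X (fun x => μ (x, e)) id
  left_unit : DigHomotopic i X X (fun x => μ (e, x)) id

/-- H-equivalence of `NP_i`-digital H-spaces. -/
def HSpaceEquiv (i : ℕ) (X : DigImage) (eX : X.carrier)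
    (μX : X.carrier × X.carrier → X.carrier)
    (Y : DigImage) (eY : Y.carrier)
    (μY : Y.carrier × Y.carrier → Y.carrier) : Prop :=
  ∃ (f : X.carrier → Y.carrier) (g : Y.carrier → X.carrier),
    DigContinuous X Y f ∧ DigContinuous Y X g ∧ f eX = eY ∧ g eY = eX ∧
    DigHomotopic i Y Y (f ∘ g) id ∧ DigHomotopic i X X (g ∘ f) id ∧
    DigHomotopic i (DigImage.prod i X X) Y (fun p => f (μX p)) (fun p => μY (f p.1, f p.2)) ∧
    DigHomotopic i (DigImage.prod i Y Y) X (fun p => g (μY p)) (fun p => μX (g p.1, g p.2))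

/-- `NP_i`-homotopy equivalence of digital images. -/
def DigHtpyEquiv (i : ℕ) (X Y : DigImage) : Prop :=
  ∃ (f : X.carrier → Y.carrier) (g : Y.carrier → X.carrier),
    DigContinuous X Y f ∧ DigContinuous Y X g ∧
    DigHomotopic i X X (g ∘ f) id ∧ DigHomotopic i Y Y (f ∘ g) id

/-- A digital image is `NP_i`-irreducible if it is not `NP_i`-homotopy
equivalent to any digital image with fewer points. -/
def DigIrreducible (i : ℕ) (X : DigImage) : Prop :=
  ¬ ∃ Y : DigImage, Fintype.card Y.carrier < Fintype.card X.carrier ∧ DigHtpyEquiv i X Y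

/-- A digital image is connected if any two points are joined by a path
of consecutively adjacent points. -/
def DigConnected (X : DigImage) : Prop :=
  ∀ a b : X.carrier, Relation.ReflTransGen X.adj a b

/-- A digital image is `NP_i`-contractible if the identity is `NP_i`-homotopic
to a constant map. -/
def DigContractible (i : ℕ) (X : DigImage) : Prop :=
  ∃ c : X.carrier, DigHomotopic i X X id (fun _ => c)

/-- An isomorphism of digital images: a continuous bijection with continuous inverse. -/
def IsDigIso (X Y : DigImage) (f : X.carrier → Y.carrier) : Prop :=
  DigContinuous X Y f ∧ ∃ g : Y.carrier → X.carrier,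
    DigContinuous Y X g ∧ Function.LeftInverse g f ∧ Function.RightInverse g f

/-- The sub-digital-image on the points satisfying `P`, with the induced adjacency. -/
noncomputable def subImage (X : DigImage) (P : X.carrier → Prop) : DigImage where
  carrier := {x : X.carrier // P x}
  fintype := Fintype.ofFinite _
  adj a b := X.adj a.1 b.1
  adj_refl a := X.adj_refl a.1
  adj_symm h := X.adj_symm h

/-- The connected component of `e`, as a digital image. -/
noncomputable def componentImage (X : DigImage) (e : X.carrier) : DigImage :=
  subImage X (fun x => Relation.ReflTransGen X.adj e x)

/-- Homotopy-associativity of an `NP_i`-digital multiplication: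
`μ∘(id × μ) ≃ᵢ μ∘(μ × id)` as maps `X × X × X → X` with `NP_i` adjacency. -/
def HomotopyAssociative (i : ℕ) (X : DigImage)
    (μ : X.carrier × X.carrier → X.carrier) : Prop :=
  DigHomotopic i (DigImage.prod3 i X X X) X
    (fun p => μ (p.1, μ (p.2.1, p.2.2)))
    (fun p => μ (μ (p.1, p.2.1), p.2.2))

/-- `α` is a left homotopy-inverse for the H-space `(X,e,μ)`. -/
def LeftHtpyInverse (i : ℕ) (X : DigImage) (e : X.carrier)
    (μ : X.carrier × X.carrier → X.carrier) (α : X.carrier → X.carrier) : Prop :=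
  DigContinuous X X α ∧ DigContinuous X X (fun x => μ (α x, x)) ∧
  DigHomotopic i X X (fun x => μ (α x, x)) (fun _ => e)

/-- `β` is a right homotopy-inverse for the H-space `(X,e,μ)`. -/
def RightHtpyInverse (i : ℕ) (X : DigImage) (e : X.carrier)
    (μ : X.carrier × X.carrier → X.carrier) (β : X.carrier → X.carrier) : Prop :=
  DigContinuous X X β ∧ DigContinuous X X (fun x => μ (x, β x)) ∧
  DigHomotopic i X X (fun x => μ (x, β x)) (fun _ => e)

/-- The relation between `x` and `x'` under which `(x, t)` and `(x', t + 1)` are adjacent in the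
`NP_i` product of `X` with an interval. -/
def NPStepRel (i : ℕ) (X : DigImage) (x x' : X.carrier) : Prop :=
  if i ≤ 1 then x = x' else X.adj x x'

theorem NPStepRel.symm {i : ℕ} {X : DigImage} {x x' : X.carrier} (h : NPStepRel i X x x') :
    NPStepRel i X x' x := by
  unfold NPStepRel at h ⊢
  split_ifs at h ⊢
  exacts [h.symm, X.adj_symm h]

theorem prod_digInterval_adj_iff {i m : ℕ} {X : DigImage} {x x' : X.carrier}
    {t s : Fin (m + 1)} :
    (DigImage.prod i X (digInterval m)).adj (x, t) (x', s) ↔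
      (t = s ∧ X.adj x x') ∨ ((t.val + 1 = s.val ∨ s.val + 1 = t.val) ∧ NPStepRel i X x x') := by
  have hts : |(t : ℤ) - (s : ℤ)| ≤ 1 ↔ t = s ∨ t.val + 1 = s.val ∨ s.val + 1 = t.val := by
    rw [abs_le, Fin.ext_iff]; omega
  change (if i ≤ 1 then _ else _) ↔ _
  unfold NPStepRel
  split_ifs
  · change (x = x' ∧ |(t : ℤ) - (s : ℤ)| ≤ 1) ∨ (t = s ∧ X.adj x x') ↔ _
    rw [hts]
    constructor
    · rintro (⟨rfl, rfl | hts⟩ | h)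
      exacts [Or.inl ⟨rfl, X.adj_refl x⟩, Or.inr ⟨hts, rfl⟩, Or.inl h]
    · rintro (h | ⟨hts, rfl⟩)
      exacts [Or.inr h, Or.inl ⟨rfl, Or.inr hts⟩]
  · change X.adj x x' ∧ |(t : ℤ) - (s : ℤ)| ≤ 1 ↔ _
    rw [hts]
    tauto

theorem digContinuous_prod_digInterval_iff {i m : ℕ} {X Y : DigImage}
    {H : X.carrier × Fin (m + 1) → Y.carrier} :
    DigContinuous (DigImage.prod i X (digInterval m)) Y H ↔
      (∀ t, DigContinuous X Y (fun x => H (x, t))) ∧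
        ∀ (t : Fin m) ⦃x x'⦄, NPStepRel i X x x' → Y.adj (H (x, t.castSucc)) (H (x', t.succ)) := by
  constructor
  · intro hH
    refine ⟨fun t x x' hxx' => hH (prod_digInterval_adj_iff.2 (Or.inl ⟨rfl, hxx'⟩)),
      fun t x x' hxx' => hH (prod_digInterval_adj_iff.2 (Or.inr ⟨Or.inl ?_, hxx'⟩))⟩
    simp
  · rintro ⟨hslice, hstep⟩ ⟨x, (t : Fin (m + 1))⟩ ⟨x', (s : Fin (m + 1))⟩ hadj
    rcases prod_digInterval_adj_iff.1 hadj with ⟨rfl, hxx'⟩ | ⟨hts | hst, hxx'⟩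
    · exact hslice t hxx'
    · obtain ⟨t, rfl⟩ : ∃ t' : Fin m, t'.castSucc = t := ⟨⟨t, by omega⟩, rfl⟩
      obtain rfl : s = t.succ := Fin.ext (by simp [← hts])
      exact hstep t hxx'
    · obtain ⟨s, rfl⟩ : ∃ s' : Fin m, s'.castSucc = s := ⟨⟨s, by omega⟩, rfl⟩
      obtain rfl : t = s.succ := Fin.ext (by simp [← hst])
      exact Y.adj_symm (hstep s hxx'.symm)

/-- A homotopy of length one. -/
def StepHomotopic (i : ℕ) (X Y : DigImage) (f g : X.carrier → Y.carrier) : Prop :=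
  DigContinuous X Y f ∧ DigContinuous X Y g ∧
    ∀ ⦃x x'⦄, NPStepRel i X x x' → Y.adj (f x) (g x')

theorem StepHomotopic.symm {i : ℕ} {X Y : DigImage} {f g : X.carrier → Y.carrier}
    (h : StepHomotopic i X Y f g) : StepHomotopic i X Y g f :=
  ⟨h.2.1, h.1, fun _ _ hxx' => Y.adj_symm (h.2.2 hxx'.symm)⟩

instance {i : ℕ} {X Y : DigImage} : Std.Symm (StepHomotopic i X Y) :=
  ⟨fun _ _ => StepHomotopic.symm⟩

namespace DigHomotopic

variable {i : ℕ} {X Y Z : DigImage} {f g h : X.carrier → Y.carrier}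

theorem continuous_left (hfg : DigHomotopic i X Y f g) : DigContinuous X Y f := by
  obtain ⟨m, H, hH, h0, -⟩ := hfg
  simpa [← funext h0] using (digContinuous_prod_digInterval_iff.1 hH).1 0

theorem continuous_right (hfg : DigHomotopic i X Y f g) : DigContinuous X Y g := by
  obtain ⟨m, H, hH, -, hm⟩ := hfg
  simpa [← funext hm] using (digContinuous_prod_digInterval_iff.1 hH).1 (Fin.last m)

theorem refl (hf : DigContinuous X Y f) : DigHomotopic i X Y f f :=
  ⟨0, fun p => f p.1, digContinuous_prod_digInterval_iff.2 ⟨fun _ => hf, fun t => t.elim0⟩,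
    fun _ => rfl, fun _ => rfl⟩

theorem tail (hfg : DigHomotopic i X Y f g) (hgh : StepHomotopic i X Y g h) :
    DigHomotopic i X Y f h := by
  obtain ⟨m, H, hH, h0, hm⟩ := hfg
  obtain ⟨hslice, hstep⟩ := digContinuous_prod_digInterval_iff.1 hH
  refine ⟨m + 1, fun p => Fin.lastCases (h p.1) (fun t => H (p.1, t)) p.2,
    digContinuous_prod_digInterval_iff.2 ⟨?_, ?_⟩, fun x => ?_, fun x => by simp⟩
  · refine Fin.lastCases ?_ fun t => ?_
    · simpa using hgh.2.1
    · simpa using hslice t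
  · refine Fin.lastCases ?_ fun t => ?_
    · simpa [hm] using hgh.2.2
    · rw [Fin.succ_castSucc]
      simpa only [Fin.lastCases_castSucc] using hstep t
  · rw [← Fin.castSucc_zero]
    exact (Fin.lastCases_castSucc _).trans (h0 x)

theorem iff_reflTransGen :
    DigHomotopic i X Y f g ↔
      DigContinuous X Y f ∧ Relation.ReflTransGen (StepHomotopic i X Y) f g := by
  constructor
  · intro hfg
    refine ⟨hfg.continuous_left, ?_⟩
    obtain ⟨m, H, hH, h0, hm⟩ := hfg
    obtain ⟨hslice, hstep⟩ := digContinuous_prod_digInterval_iff.1 hH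
    suffices ∀ t, Relation.ReflTransGen (StepHomotopic i X Y) f (fun x => H (x, t)) by
      simpa [funext hm] using this (Fin.last m)
    refine Fin.induction (by simp only [h0]; exact .refl) fun t ih =>
      ih.tail ⟨hslice _, hslice _, hstep t⟩
  · rintro ⟨hf, hfg⟩
    induction hfg with
    | refl => exact refl hf
    | tail _ hstep ih => exact ih.tail hstep

theorem symm (hfg : DigHomotopic i X Y f g) : DigHomotopic i X Y g f :=
  iff_reflTransGen.2 ⟨hfg.continuous_right,
    Std.Symm.symm _ _ (iff_reflTransGen.1 hfg).2⟩

theorem trans (hfg : DigHomotopic i X Y f g) (hgh : DigHomotopic i X Y g h) :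
    DigHomotopic i X Y f h :=
  iff_reflTransGen.2 ⟨hfg.continuous_left,
    (iff_reflTransGen.1 hfg).2.trans (iff_reflTransGen.1 hgh).2⟩

theorem comp_left {φ : Y.carrier → Z.carrier} (hφ : DigContinuous Y Z φ)
    (hfg : DigHomotopic i X Y f g) : DigHomotopic i X Z (φ ∘ f) (φ ∘ g) := by
  obtain ⟨m, H, hH, h0, hm⟩ := hfg
  exact ⟨m, φ ∘ H, fun _ _ hpq => hφ (hH hpq), fun x => by simp [h0], fun x => by simp [hm]⟩

end DigHomotopic

theorem DigContinuous.comp {X Y Z : DigImage} {g : Y.carrier → Z.carrier}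
    {f : X.carrier → Y.carrier} (hg : DigContinuous Y Z g) (hf : DigContinuous X Y f) :
    DigContinuous X Z (g ∘ f) :=
  fun _ _ hab => hg (hf hab)

theorem DigContinuous.iterate {X : DigImage} {f : X.carrier → X.carrier}
    (hf : DigContinuous X X f) (n : ℕ) : DigContinuous X X f^[n] := by
  induction n with
  | zero => exact fun _ _ hab => hab
  | succ n ih => exact ih.comp hf

theorem DigHomotopic.iterate {i : ℕ} {X : DigImage} {f : X.carrier → X.carrier}
    (hf : DigContinuous X X f) (hfid : DigHomotopic i X X f id) (n : ℕ) :
    DigHomotopic i X X f^[n] id := by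
  induction n with
  | zero => exact .refl fun _ _ hab => hab
  | succ n ih => exact (hfid.comp_left (hf.iterate n)).trans ih

theorem exists_pow_isIdempotentElem {M : Type*} [Monoid M] [Finite M] (x : M) :
    ∃ n ≠ 0, IsIdempotentElem (x ^ n) := by
  obtain ⟨a, b, hab, hxab⟩ := Finite.exists_ne_map_eq_of_infinite (x ^ · : ℕ → M)
  wlog hlt : a < b generalizing a b
  · exact this b a hab.symm hxab.symm (by omega)
  have hperiod : ∀ k m, a ≤ m → x ^ (m + k * (b - a)) = x ^ m := by
    intro k
    induction k with
    | zero => simp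
    | succ k ih =>
      intro m hm
      calc x ^ (m + (k + 1) * (b - a)) = x ^ (m - a) * x ^ b * x ^ (k * (b - a)) := by
            rw [← pow_add, ← pow_add]; congr 1; rw [add_mul]; omega
        _ = x ^ (m + k * (b - a)) := by
            rw [← hxab, ← pow_add, ← pow_add, Nat.sub_add_cancel hm]
        _ = x ^ m := ih m hm
  refine ⟨(a + 1) * (b - a), Nat.mul_ne_zero (by omega) (by omega), ?_⟩
  rw [IsIdempotentElem, ← pow_add]
  exact hperiod (a + 1) _ (le_mul_of_le_of_one_le (by omega) (by omega))

theorem card_subImage_lt {X : DigImage} {P : X.carrier → Prop} (hP : ∃ x, ¬ P x) :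
    Fintype.card (subImage X P).carrier < Fintype.card X.carrier :=
  Fintype.card_lt_of_injective_not_surjective Subtype.val Subtype.val_injective
    fun hs => hP.elim fun x hx => (hs x).elim fun y hy => hx (hy ▸ y.2)

theorem digHtpyEquiv_subImage_range {i : ℕ} {X : DigImage} {e : X.carrier → X.carrier}
    (he : DigContinuous X X e) (he_idem : e ∘ e = e) (heid : DigHomotopic i X X e id) :
    DigHtpyEquiv i X (subImage X (· ∈ Set.range e)) := by
  let r : X.carrier → (subImage X (· ∈ Set.range e)).carrier := fun x => ⟨e x, x, rfl⟩
  let ι : (subImage X (· ∈ Set.range e)).carrier → X.carrier := Subtype.val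
  have hsection : r ∘ ι = id := by
    funext ⟨_, x, rfl⟩
    exact Subtype.ext (congrFun he_idem x)
  refine ⟨r, ι, fun _ _ hab => he hab, fun _ _ hab => hab, heid, ?_⟩
  rw [hsection]
  exact .refl fun _ _ hab => hab

theorem exists_digHtpyEquiv_card_lt {i : ℕ} {X : DigImage} {h : X.carrier → X.carrier}
    (hh : DigContinuous X X h) (hns : ¬ Function.Surjective h) (hhid : DigHomotopic i X X h id) :
    ∃ Y : DigImage, Fintype.card Y.carrier < Fintype.card X.carrier ∧ DigHtpyEquiv i X Y := by
  -- powers in the monoid `Function.End` are, by definition, iterates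
  have : Finite (Function.End X.carrier) := inferInstanceAs (Finite (X.carrier → X.carrier))
  obtain ⟨n, hn, hidem⟩ := exists_pow_isIdempotentElem (M := Function.End X.carrier) h
  have hns_n : ¬ Function.Surjective h^[n] := by
    obtain ⟨k, rfl⟩ := Nat.exists_eq_succ_of_ne_zero hn
    rw [Function.iterate_succ']
    exact fun hs => hns hs.of_comp
  exact ⟨_, card_subImage_lt (not_forall.1 hns_n),
    digHtpyEquiv_subImage_range (hh.iterate n) hidem (hhid.iterate hh n)⟩

theorem irreducible_iff_no_automorphism_homotopic_to_nonsurjection_general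
    (i : ℕ) (X : DigImage) :
    DigIrreducible i X ↔
      ¬ ∃ (f g : X.carrier → X.carrier),
        IsDigIso X X f ∧ DigContinuous X X g ∧ ¬ Function.Surjective g ∧
        DigHomotopic i X X f g := by
  refine not_congr ⟨?_, ?_⟩
  · rintro ⟨Y, hcard, f, g, hf, hg, hgf, -⟩
    refine ⟨id, g ∘ f, ⟨fun _ _ hab => hab, id, fun _ _ hab => hab, fun _ => rfl, fun _ => rfl⟩,
      hg.comp hf, fun hs => ?_, hgf.symm⟩
    exact hcard.not_ge (Fintype.card_le_of_surjective g hs.of_comp)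
  · rintro ⟨f, g, ⟨-, f', hf', hleft, hright⟩, hg, hns, hfg⟩
    have hg_eq : f ∘ (f' ∘ g) = g := funext fun x => hright (g x)
    refine exists_digHtpyEquiv_card_lt (hf'.comp hg) (fun hs => hns ?_) ?_
    · exact hg_eq ▸ hright.surjective.comp hs
    · simpa only [← Function.comp_assoc, hleft.comp_eq_id] using (hfg.comp_left hf').symm

/-- `X` is `NP_i`-irreducible iff no automorphism of `X` is
`NP_i`-homotopic to a non-surjective continuous map. -/
theorem irreducible_iff_no_automorphism_homotopic_to_nonsurjection
    (i : ℕ) (hi : i = 1 ∨ i = 2) (X : DigImage) :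
    DigIrreducible i X ↔
      ¬ ∃ (f g : X.carrier → X.carrier),
        IsDigIso X X f ∧ DigContinuous X X g ∧ ¬ Function.Surjective g ∧
        DigHomotopic i X X f g :=
  irreducible_iff_no_automorphism_homotopic_to_nonsurjection_general i X
end

section
/- Any NP_2-irreducible digital image is NP_2-rigid; that is, if X is not NP_2-homotopy equivalent to any digital image with fewer points, then the only continuous map X → X that is NP_2-homotopic to id_X is id_X itself. -/
/-
An `NP_2`-homotopy `H` from `f` to `id` can be read backwards from `t = m`: if `H(·, t+1) = id`,
then `NP_2`-continuity of `H` makes every `H(a, t)` adjacent to every neighbour `b` of `a`. At a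
point `x` with `H(x, t) ≠ x` the neighbourhood of `x` would thus lie in that of `H(x, t)`, and
folding `x` onto `H(x, t)` is a homotopy equivalence onto `X ∖ {x}`, which irreducibility forbids.
-/

namespace DigImage

variable {i : ℕ} {X Y : DigImage}

lemma adj_of_prod_adj {p q : X.carrier × Y.carrier} (h : (X.prod i Y).adj p q) :
    X.adj p.1 q.1 ∧ Y.adj p.2 q.2 := by
  simp only [DigImage.prod] at h
  split_ifs at h
  · rcases h with ⟨h₁, h₂⟩ | ⟨h₂, h₁⟩
    · exact ⟨h₁ ▸ X.adj_refl _, h₂⟩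
    · exact ⟨h₁, h₂ ▸ Y.adj_refl _⟩
  · exact h

lemma prod_adj_iff (hi : 1 < i) {p q : X.carrier × Y.carrier} :
    (X.prod i Y).adj p q ↔ X.adj p.1 q.1 ∧ Y.adj p.2 q.2 := by
  simp only [DigImage.prod, if_neg (Nat.not_le.mpr hi)]

end DigImage

open DigImage

lemma digInterval_adj_castSucc_succ {m : ℕ} (t : Fin m) :
    (digInterval m).adj t.castSucc t.succ := by
  change |((t.castSucc : ℕ) : ℤ) - ((t.succ : ℕ) : ℤ)| ≤ 1
  simp

/-- For a continuous `g`, this says exactly that `g ≃ id` by an `NP_2`-homotopy of length one. -/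
def AdjacentToId (X : DigImage) (g : X.carrier → X.carrier) : Prop :=
  ∀ ⦃a b : X.carrier⦄, X.adj a b → X.adj (g a) b

lemma digContinuous_id (X : DigImage) : DigContinuous X X id :=
  fun _ _ h => h

lemma DigHomotopic.refl_s13 {i : ℕ} {X Y : DigImage} {f : X.carrier → Y.carrier}
    (hf : DigContinuous X Y f) : DigHomotopic i X Y f f :=
  ⟨0, fun p => f p.1, fun _ _ h => hf (adj_of_prod_adj h).1, fun _ => rfl, fun _ => rfl⟩

lemma DigHomotopic.of_adjacentToId {i : ℕ} {X : DigImage} {g : X.carrier → X.carrier}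
    (hg : DigContinuous X X g) (hgid : AdjacentToId X g) : DigHomotopic i X X g id := by
  refine ⟨1, fun p => if p.2 = 0 then g p.1 else p.1, ?_, fun _ => if_pos rfl,
    fun _ => if_neg Fin.last_pos.ne'⟩
  rintro ⟨a, s⟩ ⟨b, t⟩ h
  have hab : X.adj a b := (adj_of_prod_adj h).1
  dsimp only
  split_ifs
  · exact hg hab
  · exact hgid hab
  · exact X.adj_symm (hgid (X.adj_symm hab))
  · exact hab

lemma card_subImage_ne_lt (X : DigImage) (x₀ : X.carrier) :
    Fintype.card (subImage X (· ≠ x₀)).carrier < Fintype.card X.carrier :=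
  Fintype.card_lt_of_injective_not_surjective _ Subtype.val_injective
    fun h => (h x₀).elim fun x hx => x.2 hx

section Fold

variable {X : DigImage} [DecidableEq X.carrier] {x₀ y : X.carrier}

lemma adjacentToId_update (hN : ∀ ⦃b⦄, X.adj x₀ b → X.adj y b) :
    AdjacentToId X (Function.update id x₀ y) := by
  intro a b hab
  by_cases ha : a = x₀
  · subst ha
    simpa using hN hab
  · simpa [Function.update_of_ne ha] using hab

lemma digContinuous_update (hN : ∀ ⦃b⦄, X.adj x₀ b → X.adj y b) :
    DigContinuous X X (Function.update id x₀ y) := by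
  intro a b hab
  by_cases hb : b = x₀
  · subst hb
    by_cases ha : a = b
    · subst ha
      exact X.adj_refl _
    · simpa [Function.update_of_ne ha] using X.adj_symm (hN (X.adj_symm hab))
  · simpa [Function.update_of_ne hb] using adjacentToId_update hN hab

lemma digHtpyEquiv_subImage_ne (i : ℕ) (hy : y ≠ x₀) (hN : ∀ ⦃b⦄, X.adj x₀ b → X.adj y b) :
    DigHtpyEquiv i X (subImage X (· ≠ x₀)) := by
  have hfold : ∀ x, Function.update id x₀ y x ≠ x₀ := by
    intro x
    by_cases hx : x = x₀
    · simpa [hx] using hy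
    · simpa [Function.update_of_ne hx] using hx
  let F : X.carrier → (subImage X (· ≠ x₀)).carrier := fun x => ⟨_, hfold x⟩
  refine ⟨F, Subtype.val, fun _ _ h => digContinuous_update hN h, fun _ _ h => h,
    DigHomotopic.of_adjacentToId (digContinuous_update hN) (adjacentToId_update hN), ?_⟩
  convert DigHomotopic.refl_s13 (i := i) (digContinuous_id (subImage X (· ≠ x₀)))
  funext ⟨x, hx⟩
  exact Subtype.ext (Function.update_of_ne hx _ _)

end Fold

lemma DigIrreducible.eq_of_adj_subset {i : ℕ} {X : DigImage} (hirr : DigIrreducible i X)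
    {x₀ y : X.carrier} (hN : ∀ ⦃b⦄, X.adj x₀ b → X.adj y b) : y = x₀ := by
  classical
  by_contra hy
  exact hirr ⟨_, card_subImage_ne_lt X x₀, digHtpyEquiv_subImage_ne i hy hN⟩

lemma DigIrreducible.eq_id_of_adjacentToId {i : ℕ} {X : DigImage} (hirr : DigIrreducible i X)
    {g : X.carrier → X.carrier} (hg : AdjacentToId X g) : g = id :=
  funext fun _ => hirr.eq_of_adj_subset fun _ hb => hg hb

theorem np2_irreducible_rigid_general (X : DigImage) (hirr : DigIrreducible 2 X)
    (f : X.carrier → X.carrier)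
    (hfid : DigHomotopic 2 X X f id) :
    f = id := by
  obtain ⟨m, H, hH, h0, hm⟩ := hfid
  have hslice : ∀ t : Fin (m + 1), (fun x => H (x, t)) = id := by
    refine Fin.reverseInduction (funext hm) fun t ht => hirr.eq_id_of_adjacentToId ?_
    intro a b hab
    have h : X.adj (H (a, t.castSucc)) (H (b, t.succ)) :=
      hH ((prod_adj_iff (X := X) (Y := digInterval m) (by norm_num)).2
        ⟨hab, digInterval_adj_castSucc_succ t⟩)
    rwa [congrFun ht b] at h
  funext x
  rw [← h0 x]
  exact congrFun (hslice 0) x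

/-- Any `NP_2`-irreducible digital image is `NP_2`-rigid: the only
continuous self-map `NP_2`-homotopic to the identity is the identity itself. -/
theorem np2_irreducible_rigid (X : DigImage) (hirr : DigIrreducible 2 X)
    (f : X.carrier → X.carrier) (hf : DigContinuous X X f)
    (hfid : DigHomotopic 2 X X f id) :
    f = id :=
  np2_irreducible_rigid_general X hirr f hfid
end
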